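/- Second stability inequality: under the same hypotheses, for every k > 1 and t ≥ 0: (d/dt)(Σ_{j=0}^{k−1} b_j(t)² + ½ b_k(t)²) ≤ −Σ_{j=0}^{k−1} d_j(t)² + λ^{(k−1)/3} |b(t)|, where |b| is the ℓ² norm of b. -/

import Mathlib

open Real Set MeasureTheory Finset Filter

noncomputable def lam : ℝ := (2:ℝ) ^ ((5:ℝ)/2)

/-- Right-hand side of the dyadic system: `da_j/dt = λ^{j-1} a_{j-1}² − λ^j a_j a_{j+1} + f_j`
with `a_{-1}=0`, forcing `f_0 > 0`, `f_j = 0` for `j ≥ 1`. -/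
noncomputable def dyadicRHS (f0 : ℝ) (a : ℕ → ℝ) : ℕ → ℝ
  | 0 => -(a 0 * a 1) + f0
  | (j+1) => lam ^ j * (a j)^2 - lam ^ (j+1) * a (j+1) * a (j+2)

/-- A weak (= classical) solution of the dyadic system on `[0,∞)`: an `ℓ²`-valued
function whose components are differentiable and satisfy the ODEs. -/
def IsDyadicSolution (f0 : ℝ) (a : ℝ → ℕ → ℝ) : Prop :=
  (∀ t ∈ Ici (0:ℝ), Summable (fun j => (a t j)^2)) ∧
  (∀ j, ∀ t ∈ Ici (0:ℝ), HasDerivWithinAt (fun s => a s j) (dyadicRHS f0 (a t) j) (Ici 0) t)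

/-- Deviation from the fixed point: `b_j = a_j − λ^{−j/3}`. -/
noncomputable def bvar (a : ℝ → ℕ → ℝ) (t : ℝ) (j : ℕ) : ℝ := a t j - lam ^ (-(j:ℝ)/3)

/-- Differenced variables: `d_0 = λ^{−1/6} b_0`, `d_j = λ^{(j−1)/3}(λ^{1/6} b_j − λ^{−1/6} b_{j−1})`. -/
noncomputable def dvar (a : ℝ → ℕ → ℝ) (t : ℝ) : ℕ → ℝ
  | 0 => lam ^ (-(1:ℝ)/6) * bvar a t 0
  | (i+1) => lam ^ ((i:ℝ)/3) * (lam ^ ((1:ℝ)/6) * bvar a t (i+1) - lam ^ (-(1:ℝ)/6) * bvar a t i)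


/-!
Writing `a_j = λ^{-j/3} + b_j`, the rate `Σ_{j<k} 2 b_j ḃ_j + b_k ḃ_k` telescopes, by induction on
`k`, into `-Σ_{j<k} d_j²` minus a boundary remainder that involves only `b_{k-1}, b_k, b_{k+1}` and
`a_k, a_{k+1}`. The positive cone is invariant (`ȧ_j ≥ -λ^j a_{j+1} a_j`, so an integrating factor
keeps `a_j ≥ 0`). In the variables `x = λ^{k/3} a_k ≥ 0`, `y = λ^{(k+1)/3} a_{k+1} ≥ 0`, which equal
`1` at the fixed point, minus the remainder is at most `λ^{-1/3} (x - 1)(1 - x y)`; this is at most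
`x - 1` if `x ≥ 1`, at most `(y - 1)/4` if `y ≥ 1`, and nonpositive otherwise. Since
`x - 1 = λ^{k/3} b_k`, `y - 1 = λ^{(k+1)/3} b_{k+1}`, `λ^{1/3} ≤ 4` and `|b_j| ≤ |b|`, this gives
`λ^{(k-1)/3} |b|`.
-/
theorem nonneg_of_hasDerivWithinAt_ge_mul {f f' p : ℝ → ℝ} {t₀ : ℝ}
    (hf : ∀ t ∈ Ici t₀, HasDerivWithinAt f (f' t) (Ici t₀) t) (hp : ContinuousOn p (Ici t₀))
    (hfp : ∀ t ∈ Ici t₀, p t * f t ≤ f' t) (h₀ : 0 ≤ f t₀) :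
    ∀ t ∈ Ici t₀, 0 ≤ f t := by
  -- integrating factor `exp (-∫_{t₀}^t p)`, with `p` extended continuously to the left of `t₀`
  set P : ℝ → ℝ := fun s => ∫ u in t₀..s, p (max u t₀)
  have hP : ∀ s, HasDerivAt P (p (max s t₀)) s := fun s =>
    ((hp.comp_continuous (continuous_id.max continuous_const) fun u => le_max_right u t₀)
      |>.integral_hasStrictDerivAt t₀ s).hasDerivAt
  have hg : ∀ t ∈ Ici t₀, HasDerivWithinAt (fun s => f s * exp (-P s))
      ((f' t - p t * f t) * exp (-P t)) (Ici t₀) t := fun t ht => by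
    have := (hf t ht).fun_mul ((hP t).fun_neg.exp.hasDerivWithinAt (s := Ici t₀))
    rw [max_eq_left (mem_Ici.mp ht)] at this
    exact this.congr_deriv (by ring)
  have hmono : MonotoneOn (fun s => f s * exp (-P s)) (Ici t₀) :=
    monotoneOn_of_hasDerivWithinAt_nonneg (convex_Ici t₀)
      (fun t ht => (hg t ht).continuousWithinAt)
      (fun t ht => (hg t (interior_subset ht)).mono interior_subset)
      (fun t ht => mul_nonneg (sub_nonneg.mpr (hfp t (interior_subset ht))) (exp_pos _).le)
  intro t ht
  have := hmono self_mem_Ici ht ht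
  simp only [P, intervalIntegral.integral_same, neg_zero, exp_zero, mul_one] at this
  exact nonneg_of_mul_nonneg_left (h₀.trans this) (exp_pos _)

lemma summable_sq_sub {ι : Type*} {f g : ι → ℝ} (hf : Summable fun i => f i ^ 2)
    (hg : Summable fun i => g i ^ 2) : Summable fun i => (f i - g i) ^ 2 :=
  .of_nonneg_of_le (fun i => sq_nonneg _) (fun i => by nlinarith [sq_nonneg (f i + g i)])
    ((hf.mul_left 2).add (hg.mul_left 2))

lemma abs_le_sqrt_tsum_sq {ι : Type*} {f : ι → ℝ} (hf : Summable fun i => f i ^ 2) (i : ι) :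
    |f i| ≤ √(∑' j, f j ^ 2) :=
  abs_le_sqrt (hf.le_tsum i fun _ _ => sq_nonneg _)

lemma sub_one_mul_one_sub_mul_le {x y B : ℝ} (hx : 0 ≤ x) (hy : 0 ≤ y) (hB : 0 ≤ B)
    (hxB : x - 1 ≤ B) (hyB : y - 1 ≤ 4 * B) : (x - 1) * (1 - x * y) ≤ B := by
  rcases le_total 1 x with hx1 | hx1
  · nlinarith [mul_nonneg (sub_nonneg.mpr hx1) (mul_nonneg hx hy)]
  rcases le_total 1 y with hy1 | hy1
  · -- `y ((y - 1) - 4 (x - 1)(1 - x y)) = (2 x y - y - 1)² + (y - 1)`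
    nlinarith [sq_nonneg (2 * x * y - y - 1)]
  · nlinarith [mul_nonneg (sub_nonneg.mpr hx1) (sub_nonneg.mpr hy1)]

-- Every power of `λ` occurring in the system is an integer power of `λ^{1/6}`.
noncomputable def lamRoot : ℝ := lam ^ ((1:ℝ)/6)

local notation "ρ" => lamRoot

lemma lam_pos : 0 < lam := rpow_pos_of_pos two_pos _

lemma lamRoot_eq : ρ = 2 ^ ((5:ℝ)/12) := by
  rw [lamRoot, lam, ← rpow_mul zero_le_two]
  norm_num

lemma one_lt_lamRoot : 1 < ρ := lamRoot_eq ▸ one_lt_rpow one_lt_two (by norm_num)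

lemma lamRoot_pos : 0 < ρ := zero_lt_one.trans one_lt_lamRoot

lemma lamRoot_sq_le_four : ρ ^ 2 ≤ 4 := by
  have : ρ ≤ 2 := by
    simpa [lamRoot_eq] using rpow_le_rpow_of_exponent_le one_le_two (by norm_num : (5:ℝ)/12 ≤ 1)
  nlinarith [lamRoot_pos]

lemma lam_rpow_div_six (n : ℕ) : lam ^ ((n:ℝ)/6) = ρ ^ n := by
  rw [lamRoot, ← rpow_natCast, ← rpow_mul lam_pos.le]
  ring_nf

lemma lam_rpow_neg_div_six (n : ℕ) : lam ^ (-(n:ℝ)/6) = (ρ ^ n)⁻¹ := by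
  rw [neg_div, rpow_neg lam_pos.le, lam_rpow_div_six]

lemma lam_rpow_div_three (n : ℕ) : lam ^ ((n:ℝ)/3) = ρ ^ (2 * n) := by
  rw [← lam_rpow_div_six]
  push_cast
  ring_nf

lemma lam_rpow_neg_div_three (n : ℕ) : lam ^ (-(n:ℝ)/3) = (ρ ^ (2 * n))⁻¹ := by
  rw [neg_div, rpow_neg lam_pos.le, lam_rpow_div_three]

lemma lam_pow (n : ℕ) : lam ^ n = ρ ^ (6 * n) := by
  rw [pow_mul, ← lam_rpow_div_six 6]
  norm_num

lemma bvar_eq (a : ℝ → ℕ → ℝ) (t : ℝ) (j : ℕ) : bvar a t j = a t j - (ρ ^ (2 * j))⁻¹ := by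
  rw [bvar, lam_rpow_neg_div_three]

lemma dvar_zero (a : ℝ → ℕ → ℝ) (t : ℝ) : dvar a t 0 = ρ⁻¹ * bvar a t 0 := by
  rw [dvar, ← pow_one ρ, ← lam_rpow_neg_div_six 1, Nat.cast_one]

lemma dvar_succ (a : ℝ → ℕ → ℝ) (t : ℝ) (i : ℕ) :
    dvar a t (i + 1) = ρ ^ (2 * i) * (ρ * bvar a t (i + 1) - ρ⁻¹ * bvar a t i) := by
  rw [dvar, lam_rpow_div_three, ← pow_one ρ, ← lam_rpow_neg_div_six 1, Nat.cast_one, pow_one]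
  rfl

lemma dyadicRHS_zero (a : ℕ → ℝ) :
    dyadicRHS (lam ^ (-(1:ℝ)/3)) a 0 = -(a 0 * a 1) + (ρ ^ 2)⁻¹ := by
  simpa [dyadicRHS] using lam_rpow_neg_div_three 1

lemma dyadicRHS_succ (f0 : ℝ) (a : ℕ → ℝ) (j : ℕ) :
    dyadicRHS f0 a (j + 1)
      = ρ ^ (6 * j) * a j ^ 2 - ρ ^ (6 * (j + 1)) * a (j + 1) * a (j + 2) := by
  rw [dyadicRHS, lam_pow, lam_pow]

section
variable {f0 : ℝ} {a : ℝ → ℕ → ℝ}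

theorem IsDyadicSolution.nonneg (hf0 : 0 ≤ f0) (ha : IsDyadicSolution f0 a)
    (h0 : ∀ j, 0 ≤ a 0 j) (j : ℕ) : ∀ t ∈ Ici (0:ℝ), 0 ≤ a t j := by
  refine nonneg_of_hasDerivWithinAt_ge_mul (ha.2 j) (p := fun s => -(lam ^ j * a s (j + 1)))
    (continuousOn_const.mul fun s hs => (ha.2 (j + 1) s hs).continuousWithinAt).neg
    (fun t _ => ?_) (h0 j)
  cases j with
  | zero => simp only [dyadicRHS]; linarith
  | succ i =>
    simp only [dyadicRHS]
    nlinarith [mul_nonneg (pow_nonneg lam_pos.le i) (sq_nonneg (a t i))]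

noncomputable def energyRate (f0 : ℝ) (a : ℝ → ℕ → ℝ) (t : ℝ) (k : ℕ) : ℝ :=
  ∑ j ∈ range k, 2 * bvar a t j * dyadicRHS f0 (a t) j + bvar a t k * dyadicRHS f0 (a t) k

theorem IsDyadicSolution.hasDerivWithinAt_energy (ha : IsDyadicSolution f0 a) (k : ℕ) {t : ℝ}
    (ht : t ∈ Ici (0:ℝ)) :
    HasDerivWithinAt (fun s => ∑ j ∈ range k, bvar a s j ^ 2 + 1 / 2 * bvar a s k ^ 2)
      (energyRate f0 a t k) (Ici 0) t := by
  have hsq (j : ℕ) : HasDerivWithinAt (fun s => bvar a s j ^ 2)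
      (2 * bvar a t j * dyadicRHS f0 (a t) j) (Ici 0) t :=
    ((ha.2 j t ht).sub_const _).fun_pow 2 |>.congr_deriv (by rw [bvar]; ring)
  exact ((HasDerivWithinAt.fun_sum fun j _ => hsq j).fun_add ((hsq k).const_mul (1 / 2)))
    |>.congr_deriv (by rw [energyRate]; ring)

end

section
variable (a : ℝ → ℕ → ℝ) (t : ℝ)

-- `a_j` measured in units of its fixed-point value `λ^{-j/3}`
noncomputable def relMode (j : ℕ) : ℝ := ρ ^ (2 * j) * a t j

lemma relMode_sub_one (j : ℕ) : relMode a t j - 1 = ρ ^ (2 * j) * bvar a t j := by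
  rw [relMode, bvar_eq, mul_sub, mul_inv_cancel₀ (pow_ne_zero _ lamRoot_pos.ne')]

noncomputable def energyRemainder (m : ℕ) : ℝ :=
  ρ ^ (6 * m) * a t (m + 1) * bvar a t m ^ 2
    + (ρ ^ 2)⁻¹ * (relMode a t (m + 1) - 1) * (relMode a t (m + 1) * relMode a t (m + 2) - 1)

lemma energyRate_one :
    energyRate (lam ^ (-(1:ℝ)/3)) a t 1 = -dvar a t 0 ^ 2 - energyRemainder a t 0 := by
  have := lamRoot_pos.ne'
  simp only [energyRate, energyRemainder, relMode, sum_range_one, dyadicRHS_zero,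
    dyadicRHS_succ, dvar_zero, bvar_eq]
  field_simp
  ring

lemma energyRate_add_two (n : ℕ) :
    energyRate (lam ^ (-(1:ℝ)/3)) a t (n + 1 + 1)
      = energyRate (lam ^ (-(1:ℝ)/3)) a t (n + 1) - dvar a t (n + 1) ^ 2
        - energyRemainder a t (n + 1) + energyRemainder a t n := by
  have := lamRoot_pos.ne'
  rw [energyRate, energyRate, sum_range_succ _ (n + 1)]
  simp only [energyRemainder, relMode, dyadicRHS_succ, dvar_succ, bvar_eq]
  field_simp
  ring

lemma energyRate_eq (m : ℕ) :
    energyRate (lam ^ (-(1:ℝ)/3)) a t (m + 1)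
      = -∑ j ∈ range (m + 1), dvar a t j ^ 2 - energyRemainder a t m := by
  induction m with
  | zero => simpa using energyRate_one a t
  | succ n ih =>
    rw [energyRate_add_two, ih, sum_range_succ _ (n + 1)]
    ring

lemma neg_energyRemainder_le {m : ℕ} {M : ℝ} (h₁ : 0 ≤ a t (m + 1)) (h₂ : 0 ≤ a t (m + 2))
    (hM₁ : |bvar a t (m + 1)| ≤ M) (hM₂ : |bvar a t (m + 2)| ≤ M) :
    -energyRemainder a t m ≤ ρ ^ (2 * m) * M := by
  have hρ := lamRoot_pos
  have hM : 0 ≤ M := (abs_nonneg _).trans hM₁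
  set B := ρ ^ (2 * (m + 1)) * M
  have hx : relMode a t (m + 1) - 1 ≤ B := by
    rw [relMode_sub_one]
    exact mul_le_mul_of_nonneg_left (le_of_abs_le hM₁) (by positivity)
  have hy : relMode a t (m + 2) - 1 ≤ 4 * B := calc
    _ = ρ ^ (2 * (m + 2)) * bvar a t (m + 2) := relMode_sub_one ..
    _ ≤ ρ ^ (2 * (m + 2)) * M := by gcongr; exact le_of_abs_le hM₂
    _ = ρ ^ 2 * B := by ring
    _ ≤ 4 * B := by gcongr; exact lamRoot_sq_le_four
  have key := sub_one_mul_one_sub_mul_le (by unfold relMode; positivity)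
    (by unfold relMode; positivity) (by positivity) hx hy
  have hB : (ρ ^ 2)⁻¹ * B = ρ ^ (2 * m) * M := by
    field_simp
    ring
  have : 0 ≤ ρ ^ (6 * m) * a t (m + 1) * bvar a t m ^ 2 := by positivity
  rw [energyRemainder, ← hB]
  linarith [mul_le_mul_of_nonneg_left key (inv_nonneg.mpr (sq_nonneg ρ))]

lemma summable_bvar_sq (ha : Summable fun j => a t j ^ 2) : Summable fun j => bvar a t j ^ 2 := by
  refine summable_sq_sub ha ?_
  have hr : (ρ ^ 4)⁻¹ < 1 := inv_lt_one_of_one_lt₀ (one_lt_pow₀ one_lt_lamRoot (by norm_num))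
  refine (summable_geometric_of_lt_one (by positivity) hr).congr fun j => ?_
  rw [lam_rpow_neg_div_three]
  ring

end

theorem stability_two (a : ℝ → ℕ → ℝ) (ha : IsDyadicSolution (lam ^ (-(1:ℝ)/3)) a)
    (h0 : ∀ j, 0 ≤ a 0 j) :
    ∀ k : ℕ, 1 < k → ∀ t ∈ Ici (0:ℝ), ∀ D : ℝ,
      HasDerivWithinAt (fun s => (∑ j ∈ Finset.range k, (bvar a s j)^2) + (1/2) * (bvar a s k)^2)
        D (Ici 0) t →
      D ≤ -(∑ j ∈ Finset.range k, (dvar a t j)^2)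
            + lam ^ (((k:ℝ)-1)/3) * Real.sqrt (∑' j, (bvar a t j)^2) := by
  intro k hk t ht D hD
  obtain ⟨m, rfl⟩ : ∃ m, k = m + 1 := ⟨k - 1, by omega⟩
  have ha_nonneg := ha.nonneg (rpow_pos_of_pos lam_pos _).le h0
  have hb := abs_le_sqrt_tsum_sq (summable_bvar_sq a t (ha.1 t ht))
  have hDeq : D = energyRate _ a t (m + 1) :=
    (uniqueDiffOn_Ici 0 t ht).eq_deriv _ hD (ha.hasDerivWithinAt_energy (m + 1) ht)
  rw [hDeq, energyRate_eq, Nat.cast_succ, add_sub_cancel_right, lam_rpow_div_three]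
  linarith [neg_energyRemainder_le a t (m := m) (ha_nonneg _ t ht) (ha_nonneg _ t ht)
    (hb _) (hb _)]
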